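/- Define θ on nonempty partitions into distinct odd parts by: if ℓ(π) ≥ 5, θ(π)=0 when ℓ(π)-2 is a part of π and 1 otherwise; if ℓ(π) ∈ {1,3}, θ(π)=0 if 1 is a part of π and 1 otherwise; and set θ(∅)=0 with z^0 contribution 1 for the empty partition. Then (-q;q²)_∞ (1 - q² + zq²) = (z-1)q² + Σ_{π ∈ POD} z^{θ(π)} q^{|π|}, where POD is the set of partitions into distinct odd parts. -/

import Mathlib

set_option linter.unusedTactic false


open Finset PowerSeries

/-- The Andrews–Garvan crank of a multiset of parts: the largest part if there
are no ones, otherwise (number of parts larger than the number of ones) minus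
(number of ones). -/
def crankM (s : Multiset ℕ) : ℤ :=
  if 1 ∈ s then
    ((s.filter fun x => Multiset.count 1 s < x).card : ℤ) - Multiset.count 1 s
  else (s.sup : ℤ)

/-- The Andrews–Garvan crank of a partition. -/
def crank {n : ℕ} (p : n.Partition) : ℤ := crankM p.parts

/-- `M(m,n)`: the number of partitions of `n` with crank `m`. -/
def crankCount (n : ℕ) (m : ℤ) : ℕ :=
  ((Finset.univ : Finset n.Partition).filter fun p => crank p = m).card

/-- The Laurent polynomial ring `ℤ[z,z⁻¹]` of the crank variable. -/
abbrev L : Type := LaurentPolynomial ℤ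

/-- The crank variable `z`. -/
noncomputable def Z : L := LaurentPolynomial.T 1

/-- `z⁻¹`. -/
noncomputable def Zi : L := LaurentPolynomial.T (-1)

/-- `θ(π)` for a partition `π` into distinct odd parts. -/
def thetaPOD {n : ℕ} (p : n.Partition) : ℕ :=
  if 5 ≤ p.parts.sup then (if p.parts.sup - 2 ∈ p.parts then 0 else 1)
  else if p.parts.sup = 3 ∨ p.parts.sup = 1 then (if 1 ∈ p.parts then 0 else 1)
  else 0

open PowerSeries

namespace Theorems100

noncomputable section

variable {α : Type*}

open Finset

open scoped Classical

/-- The partial product for the generating function for odd partitions.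
TODO: As `m` tends to infinity, this converges (in the `X`-adic topology).

If `m` is sufficiently large, the `i`th coefficient gives the number of odd partitions of the
natural number `i`: proved in `oddGF_prop`.
It is stated for an arbitrary field `α`, though it usually suffices to use `ℚ` or `ℝ`.
-/
def partialOddGF (m : ℕ) [Field α] :=
  ∏ i ∈ range m, (1 - (X : PowerSeries α) ^ (2 * i + 1))⁻¹

/-- The partial product for the generating function for distinct partitions.
TODO: As `m` tends to infinity, this converges (in the `X`-adic topology).

If `m` is sufficiently large, the `i`th coefficient gives the number of distinct partitions of the
natural number `i`: proved in `distinctGF_prop`.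
It is stated for an arbitrary commutative semiring `α`, though it usually suffices to use `ℕ`, `ℚ`
or `ℝ`.
-/
def partialDistinctGF (m : ℕ) [CommSemiring α] :=
  ∏ i ∈ range m, (1 + (X : PowerSeries α) ^ (i + 1))

open Finset.HasAntidiagonal

universe u
variable {ι : Type u}

/-- A convenience constructor for the power series whose coefficients indicate a subset. -/
def indicatorSeries (α : Type*) [Semiring α] (s : Set ℕ) : PowerSeries α :=
  PowerSeries.mk fun n => if n ∈ s then 1 else 0

theorem coeff_indicator (s : Set ℕ) [Semiring α] (n : ℕ) :
    coeff (R := α) n (indicatorSeries _ s) = if n ∈ s then 1 else 0 :=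
  coeff_mk _ _

theorem coeff_indicator_pos (s : Set ℕ) [Semiring α] (n : ℕ) (h : n ∈ s) :
    coeff (R := α) n (indicatorSeries _ s) = 1 := by rw [coeff_indicator, if_pos h]

theorem coeff_indicator_neg (s : Set ℕ) [Semiring α] (n : ℕ) (h : n ∉ s) :
    coeff (R := α) n (indicatorSeries _ s) = 0 := by rw [coeff_indicator, if_neg h]

theorem constantCoeff_indicator (s : Set ℕ) [Semiring α] :
    constantCoeff (R := α) (indicatorSeries _ s) = if 0 ∈ s then 1 else 0 :=
  rfl

theorem two_series (i : ℕ) [Semiring α] :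
    1 + (X : PowerSeries α) ^ i.succ = indicatorSeries α {0, i.succ} := by
  ext n
  simp only [coeff_indicator, coeff_one, coeff_X_pow, Set.mem_insert_iff, Set.mem_singleton_iff,
    map_add]
  cases' n with d
  · simp [(Nat.succ_ne_zero i).symm]
  · simp [Nat.succ_ne_zero d]

theorem num_series' [Field α] (i : ℕ) :
    (1 - (X : PowerSeries α) ^ (i + 1))⁻¹ = indicatorSeries α {k | i + 1 ∣ k} := by
  rw [PowerSeries.inv_eq_iff_mul_eq_one]
  · ext n
    cases n with
    | zero => simp [mul_sub, zero_pow, constantCoeff_indicator]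
    | succ n =>
      simp only [coeff_one, if_false, mul_sub, mul_one, coeff_indicator,
        LinearMap.map_sub, reduceCtorEq]
      simp_rw [coeff_mul, coeff_X_pow, coeff_indicator, @boole_mul _ _ _ _]
      erw [@sum_ite _ _ _ _ _ (fun _ => Classical.propDecidable _), sum_ite]
      simp_rw [@filter_filter _ _ _ _ _, sum_const_zero, add_zero, sum_const, nsmul_eq_mul, mul_one,
        sub_eq_iff_eq_add, zero_add]
      symm
      split_ifs with h
      · suffices #{a ∈ antidiagonal (n + 1) | i + 1 ∣ a.fst ∧ a.snd = i + 1} = 1 by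
          simp only [Set.mem_setOf_eq]; convert congr_arg ((↑) : ℕ → α) this; norm_cast
        rw [card_eq_one]
        cases' h with p hp
        refine ⟨((i + 1) * (p - 1), i + 1), ?_⟩
        ext ⟨a₁, a₂⟩
        simp only [mem_filter, Prod.mk_inj, HasAntidiagonal.mem_antidiagonal, mem_singleton]
        constructor
        · rintro ⟨a_left, ⟨a, rfl⟩, rfl⟩
          refine ⟨?_, rfl⟩
          rw [Nat.mul_sub_left_distrib, ← hp, ← a_left, mul_one, Nat.add_sub_cancel]
        · rintro ⟨rfl, rfl⟩
          match p with
          | 0 => rw [mul_zero] at hp; cases hp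
          | p + 1 => rw [hp]; simp [mul_add]
      · suffices #{a ∈ antidiagonal (n + 1) | i + 1 ∣ a.fst ∧ a.snd = i + 1} = 0 by
          simp only [Set.mem_setOf_eq]; convert congr_arg ((↑) : ℕ → α) this; norm_cast
        rw [card_eq_zero]
        apply eq_empty_of_forall_notMem
        simp only [Prod.forall, mem_filter, not_and, HasAntidiagonal.mem_antidiagonal]
        rintro _ h₁ h₂ ⟨a, rfl⟩ rfl
        apply h
        simp [← h₂]
  · simp [zero_pow]

def mkOdd : ℕ ↪ ℕ :=
  ⟨fun i => 2 * i + 1, fun x y h => by linarith⟩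

-- The main workhorse of the partition theorem proof.
theorem partialGF_prop (α : Type*) [CommSemiring α] (n : ℕ) (s : Finset ℕ) (hs : ∀ i ∈ s, 0 < i)
    (c : ℕ → Set ℕ) (hc : ∀ i, i ∉ s → 0 ∈ c i) :
    #{p : n.Partition | (∀ j, p.parts.count j ∈ c j) ∧ ∀ j ∈ p.parts, j ∈ s} =
      coeff (R := α) n (∏ i ∈ s, indicatorSeries α ((· * i) '' c i)) := by
  simp_rw [coeff_prod, coeff_indicator, prod_boole, sum_boole]
  apply congr_arg
  simp only [mem_univ, forall_true_left, not_and, not_forall, exists_prop,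
    Set.mem_image, not_exists]
  set φ : (a : Nat.Partition n) →
    a ∈ filter (fun p ↦ (∀ (j : ℕ), Multiset.count j p.parts ∈ c j) ∧ ∀ j ∈ p.parts, j ∈ s) univ →
    ℕ →₀ ℕ := fun p _ => {
      toFun := fun i => Multiset.count i p.parts • i
      support := Finset.filter (fun i => i ≠ 0) p.parts.toFinset
      mem_support_toFun := fun a => by
        simp only [smul_eq_mul, ne_eq, mul_eq_zero, Multiset.count_eq_zero]
        rw [not_or, not_not]
        simp only [Multiset.mem_toFinset, not_not, mem_filter] }
  refine Finset.card_bij φ ?_ ?_ ?_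
  · intro a ha
    simp only [φ, not_forall, not_exists, not_and, exists_prop, mem_filter]
    rw [mem_finsuppAntidiag]
    dsimp only [ne_eq, smul_eq_mul, id_eq, eq_mpr_eq_cast, le_eq_subset, Finsupp.coe_mk]
    simp only [mem_univ, forall_true_left, not_and, not_forall, exists_prop,
      mem_filter, true_and] at ha
    refine ⟨⟨?_, fun i ↦ ?_⟩, fun i _ ↦ ⟨a.parts.count i, ha.1 i, rfl⟩⟩
    · conv_rhs => simp [← a.parts_sum]
      rw [sum_multiset_count_of_subset _ s]
      · simp only [smul_eq_mul]
      · intro i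
        simp only [Multiset.mem_toFinset, not_not, mem_filter]
        apply ha.2
    · simp only [ne_eq, Multiset.mem_toFinset, not_not, mem_filter, and_imp]
      exact fun hi _ ↦ ha.2 i hi
  · intro p₁ hp₁ p₂ hp₂ h
    apply Nat.Partition.ext
    simp only [true_and, mem_univ, mem_filter] at hp₁ hp₂
    ext i
    simp only [φ, ne_eq, Multiset.mem_toFinset, not_not, smul_eq_mul, Finsupp.mk.injEq] at h
    by_cases hi : i = 0
    · rw [hi]
      rw [Multiset.count_eq_zero_of_notMem]
      · rw [Multiset.count_eq_zero_of_notMem]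
        intro a; exact Nat.lt_irrefl 0 (hs 0 (hp₂.2 0 a))
      intro a; exact Nat.lt_irrefl 0 (hs 0 (hp₁.2 0 a))
    · rw [← mul_left_inj' hi]
      rw [funext_iff] at h
      exact h.2 i
  · simp only [φ, mem_filter, mem_finsuppAntidiag, mem_univ, exists_prop, true_and, and_assoc]
    rintro f ⟨hf, hf₃, hf₄⟩
    have hf' : f ∈ finsuppAntidiag s n := mem_finsuppAntidiag.mpr ⟨hf, hf₃⟩
    simp only [mem_finsuppAntidiag] at hf'
    refine ⟨⟨∑ i ∈ s, Multiset.replicate (f i / i) i, ?_, ?_⟩, ?_, ?_, ?_⟩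
    · intro i hi
      simp only [exists_prop, Multiset.mem_sum, mem_map, Function.Embedding.coeFn_mk] at hi
      rcases hi with ⟨t, ht, z⟩
      apply hs
      rwa [Multiset.eq_of_mem_replicate z]
    · simp_rw [Multiset.sum_sum, Multiset.sum_replicate, Nat.nsmul_eq_mul]
      rw [← hf'.1]
      refine sum_congr rfl fun i hi => Nat.div_mul_cancel ?_
      rcases hf₄ i hi with ⟨w, _, hw₂⟩
      rw [← hw₂]
      exact dvd_mul_left _ _
    · intro i
      simp_rw [Multiset.count_sum', Multiset.count_replicate, sum_ite_eq']
      split_ifs with h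
      · rcases hf₄ i h with ⟨w, hw₁, hw₂⟩
        rwa [← hw₂, Nat.mul_div_cancel _ (hs i h)]
      · exact hc _ h
    · intro i hi
      rw [Multiset.mem_sum] at hi
      rcases hi with ⟨j, hj₁, hj₂⟩
      rwa [Multiset.eq_of_mem_replicate hj₂]
    · ext i
      simp_rw [Multiset.count_sum', Multiset.count_replicate, sum_ite_eq']
      simp only [ne_eq, Multiset.mem_toFinset, not_not, smul_eq_mul, ite_mul,
        zero_mul, Finsupp.coe_mk]
      split_ifs with h
      · apply Nat.div_mul_cancel
        rcases hf₄ i h with ⟨w, _, hw₂⟩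
        apply Dvd.intro_left _ hw₂
      · apply symm
        rw [← Finsupp.notMem_support_iff]
        exact notMem_mono hf'.2 h


theorem partialOddDistinctGF_prop [CommSemiring α] (n N : ℕ) :
    #{p : n.Partition |
        p.parts.Nodup ∧ ∀ j ∈ p.parts, j ∈ (range N).map mkOdd} =
      coeff (R := α) n (∏ i ∈ range N, (1 + (X : PowerSeries α) ^ (2 * i + 1))) := by
  convert partialGF_prop α n
    ((range N).map mkOdd) _ (fun _ => {0, 1}) (fun _ _ => Or.inl rfl)
    using 2
  · congr! with p
    rw [Multiset.nodup_iff_count_le_one]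
    congr! 1 with i
    rcases Multiset.count i p.parts with (_ | _ | ms) <;> simp
  · rw [Finset.prod_map]
    refine Finset.prod_congr rfl fun i _ => ?_
    have : (2 * i + 1) = (2 * i).succ := rfl
    rw [this, two_series]
    congr 1
    simp [Set.image_pair, mkOdd]; rfl
  · simp only [mem_map, Function.Embedding.coeFn_mk]
    rintro i ⟨_, _, rfl⟩
    exact Nat.succ_pos _

theorem oddDistinctGF_prop [CommSemiring α] (n N : ℕ) (h : n ≤ N) :
    #(Nat.Partition.oddDistincts n) =
      coeff (R := α) n (∏ i ∈ range N, (1 + (X : PowerSeries α) ^ (2 * i + 1))) := by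
  rw [← partialOddDistinctGF_prop]
  congr 2
  rw [Nat.Partition.oddDistincts, Nat.Partition.odds, Nat.Partition.restricted, Nat.Partition.distincts]
  ext p
  simp only [mem_inter, mem_filter, mem_univ, true_and]
  constructor
  · rintro ⟨hodd, hnodup⟩
    refine ⟨hnodup, fun j hj => ?_⟩
    have hj1 : j ≤ n := by
      simpa [p.parts_sum] using Multiset.single_le_sum (fun _ _ => Nat.zero_le _) _ hj
    have hodd' : ¬ Even j := hodd j hj
    rw [Nat.not_even_iff] at hodd'
    simp only [mem_map, mem_range, mkOdd, Function.Embedding.coeFn_mk]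
    exact ⟨j / 2, by omega, show 2 * (j / 2) + 1 = j by omega⟩
  · rintro ⟨hnodup, hmem⟩
    refine ⟨fun j hj => ?_, hnodup⟩
    obtain ⟨a, -, rfl⟩ := mem_map.mp (hmem j hj)
    show ¬ Even (2 * a + 1)
    simp only [mkOdd, Function.Embedding.coeFn_mk, Nat.even_iff]
    omega


end
end Theorems100

section Combinatorics

open Multiset in
theorem multiset_sup_mem (s : Multiset ℕ) (hs : s ≠ 0) : s.sup ∈ s := by
  induction s using Multiset.induction with
  | empty => simp at hs
  | cons a t ih =>
    rw [Multiset.sup_cons]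
    rcases eq_or_ne t 0 with rfl | ht
    · simp
    · rcases le_total t.sup a with h | h
      · rw [sup_eq_left.mpr h]; exact Multiset.mem_cons_self a t
      · rw [sup_eq_right.mpr h]; exact Multiset.mem_cons_of_mem (ih ht)

theorem mem_oddDistincts {n : ℕ} {p : n.Partition} :
    p ∈ Nat.Partition.oddDistincts n ↔ (∀ i ∈ p.parts, ¬Even i) ∧ p.parts.Nodup := by
  simp [Nat.Partition.oddDistincts, Nat.Partition.odds, Nat.Partition.distincts,
    Nat.Partition.restricted, Finset.mem_inter, Finset.mem_filter]

theorem part_le {n : ℕ} (p : n.Partition) {j : ℕ} (hj : j ∈ p.parts) : j ≤ n := by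
  simpa [p.parts_sum] using Multiset.single_le_sum (fun _ _ => Nat.zero_le _) _ hj

theorem parts_ne_zero {n : ℕ} (p : n.Partition) (hn : 0 < n) : p.parts ≠ 0 := by
  intro h
  have := p.parts_sum
  rw [h] at this
  simp at this
  omega

theorem thetaPOD_le_one {n : ℕ} (p : n.Partition) : thetaPOD p ≤ 1 := by
  unfold thetaPOD
  split_ifs <;> omega

theorem oddDistincts_two : Nat.Partition.oddDistincts 2 = ∅ := by
  rw [Finset.eq_empty_iff_forall_notMem]
  intro p hp
  obtain ⟨hodd, hnodup⟩ := mem_oddDistincts.mp hp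
  have h1 : ∀ i ∈ p.parts, i = 1 := by
    intro i hi
    have h2 := part_le p hi
    have h3 := p.parts_pos hi
    have h4 := hodd i hi
    rw [Nat.not_even_iff] at h4
    omega
  have hrep := Multiset.eq_replicate_card.mpr h1
  have hsum := p.parts_sum
  rw [hrep] at hsum hnodup
  rw [Multiset.sum_replicate, smul_eq_mul, mul_one] at hsum
  rw [hsum] at hnodup
  simp [Multiset.replicate_succ] at hnodup

theorem theta_zero_of_small {n : ℕ} (hn : n ≤ 1) (p : n.Partition) : thetaPOD p = 0 := by
  have hsup : p.parts.sup ≤ 1 := by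
    rw [Multiset.sup_le]
    intro b hb
    exact le_trans (part_le p hb) hn
  unfold thetaPOD
  have h5 : ¬ 5 ≤ p.parts.sup := by omega
  rw [if_neg h5]
  split_ifs with h1 h2
  · rfl
  · exfalso
    rcases h1 with h1 | h1
    · omega
    · apply h2
      have : p.parts ≠ 0 := by
        intro h; rw [h] at h1; simp [Multiset.sup_zero] at h1
      have := multiset_sup_mem p.parts this
      rwa [h1] at this
  · rfl

theorem oddDistincts_zero_card : #(Nat.Partition.oddDistincts 0) = 1 := by
  rw [Finset.card_eq_one]
  refine ⟨⟨0, by simp, by simp⟩, ?_⟩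
  rw [Finset.eq_singleton_iff_unique_mem]
  constructor
  · rw [mem_oddDistincts]; simp
  · intro p _
    have hp : p.parts = 0 := by
      by_contra h
      obtain ⟨a, ha⟩ := Multiset.exists_mem_of_ne_zero h
      have h1 := p.parts_pos ha
      have h2 := part_le p ha
      omega
    exact Nat.Partition.ext hp

/-- The key bijection: adding 2 to the largest part. -/
theorem bij_card (m : ℕ) (hm : 0 < m) :
    #(Nat.Partition.oddDistincts m) =
      #((Nat.Partition.oddDistincts (m + 2)).filter fun p => thetaPOD p = 1) := by
  classical
  -- facts about a partition in oddDistincts m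
  have facts : ∀ p : m.Partition, p ∈ Nat.Partition.oddDistincts m →
      p.parts.sup ∈ p.parts := fun p hp =>
    multiset_sup_mem p.parts (parts_ne_zero p hm)
  refine Finset.card_bij
    (fun p hp => ⟨(p.parts.sup + 2) ::ₘ p.parts.erase p.parts.sup, ?_, ?_⟩) ?_ ?_ ?_
  · -- positivity
    intro i hi
    rcases Multiset.mem_cons.mp hi with rfl | hi
    · omega
    · exact p.parts_pos (Multiset.mem_of_mem_erase hi)
  · -- sum
    have h := Multiset.cons_erase (facts p hp)
    have hsum : p.parts.sum = m := p.parts_sum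
    rw [← h, Multiset.sum_cons] at hsum
    rw [Multiset.sum_cons]
    omega
  · -- membership in the target
    intro p hp
    obtain ⟨hodd, hnodup⟩ := mem_oddDistincts.mp hp
    set ℓ := p.parts.sup with hℓ
    have hmem : ℓ ∈ p.parts := facts p hp
    have hℓodd : ¬Even ℓ := hodd ℓ hmem
    have hℓpos : 0 < ℓ := p.parts_pos hmem
    have hnotin : ℓ ∉ p.parts.erase ℓ := hnodup.notMem_erase
    have herase_le : ∀ x ∈ p.parts.erase ℓ, x ≤ ℓ :=
      fun x hx => Multiset.le_sup (Multiset.mem_of_mem_erase hx)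
    have hsupnew : ((ℓ + 2) ::ₘ p.parts.erase ℓ).sup = ℓ + 2 := by
      rw [Multiset.sup_cons]
      have : (p.parts.erase ℓ).sup ≤ ℓ + 2 := by
        rw [Multiset.sup_le]
        intro b hb; exact le_trans (herase_le b hb) (by omega)
      omega
    rw [Finset.mem_filter]
    constructor
    · rw [mem_oddDistincts]
      constructor
      · intro i hi
        rcases Multiset.mem_cons.mp hi with rfl | hi
        · rw [Nat.not_even_iff] at hℓodd ⊢; omega
        · exact hodd i (Multiset.mem_of_mem_erase hi)
      · rw [Multiset.nodup_cons]
        refine ⟨fun h => ?_, hnodup.erase ℓ⟩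
        have := herase_le _ h
        omega
    · -- theta = 1
      show thetaPOD _ = 1
      unfold thetaPOD
      simp only [← hℓ, hsupnew]
      rw [Nat.not_even_iff] at hℓodd
      by_cases h5 : 5 ≤ ℓ + 2
      · rw [if_pos h5, if_neg]
        intro hmem2
        simp only [Nat.add_sub_cancel] at hmem2
        rcases Multiset.mem_cons.mp hmem2 with h | h
        · omega
        · exact hnotin h
      · -- ℓ = 1
        have hℓ1 : ℓ = 1 := by omega
        rw [if_neg h5, if_pos (by omega), if_neg]
        intro hmem2
        rcases Multiset.mem_cons.mp hmem2 with h | h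
        · omega
        · rw [← hℓ1] at h; exact hnotin h
  · -- injectivity
    intro p hp q hq h
    have hparts := congrArg Nat.Partition.parts h
    simp only at hparts
    have hsup : p.parts.sup = q.parts.sup := by
      have hs := congrArg Multiset.sup hparts
      have hle : ∀ (r : m.Partition), r ∈ Nat.Partition.oddDistincts m →
          ((r.parts.sup + 2) ::ₘ r.parts.erase r.parts.sup).sup = r.parts.sup + 2 := by
        intro r hr
        rw [Multiset.sup_cons]
        have : (r.parts.erase r.parts.sup).sup ≤ r.parts.sup + 2 := by
          rw [Multiset.sup_le]
          intro b hb
          exact le_trans (Multiset.le_sup (Multiset.mem_of_mem_erase hb)) (by omega)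
        omega
      have := (hle p hp).symm.trans (hs.trans (hle q hq))
      omega
    rw [hsup] at hparts
    have h2 := (Multiset.cons_inj_right _).mp hparts
    apply Nat.Partition.ext
    rw [← Multiset.cons_erase (facts p hp), ← Multiset.cons_erase (facts q hq), hsup, h2]
  · -- surjectivity
    intro q hq
    rw [Finset.mem_filter] at hq
    obtain ⟨hq1, hθ⟩ := hq
    obtain ⟨hodd, hnodup⟩ := mem_oddDistincts.mp hq1
    set L := q.parts.sup with hL
    have hqne : q.parts ≠ 0 := parts_ne_zero q (by omega)
    have hmem : L ∈ q.parts := multiset_sup_mem q.parts hqne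
    have hLodd : ¬Even L := hodd L hmem
    have hLodd' : L % 2 = 1 := Nat.not_even_iff.mp hLodd
    -- from theta = 1 extract: 3 ≤ L and L - 2 ∉ q.parts
    have hkey : 3 ≤ L ∧ L - 2 ∉ q.parts := by
      unfold thetaPOD at hθ
      rw [← hL] at hθ
      by_cases h1 : 5 ≤ L
      · rw [if_pos h1] at hθ
        by_cases h2 : L - 2 ∈ q.parts
        · rw [if_pos h2] at hθ; exact absurd hθ (by omega)
        · exact ⟨by omega, h2⟩
      · rw [if_neg h1] at hθ
        by_cases h3 : L = 3 ∨ L = 1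
        · rw [if_pos h3] at hθ
          by_cases h4 : 1 ∈ q.parts
          · rw [if_pos h4] at hθ; exact absurd hθ (by omega)
          · rw [if_neg h4] at hθ
            rcases h3 with h3 | h3
            · refine ⟨by omega, ?_⟩
              rw [h3]; simpa using h4
            · exact absurd (h3 ▸ hmem) h4
        · rw [if_neg h3] at hθ; exact absurd hθ (by omega)
    obtain ⟨hL3, hL2notin⟩ := hkey
    have herase_lt : ∀ x ∈ q.parts.erase L, x ≤ L - 2 := by
      intro x hx
      have h1 : x ≤ L := Multiset.le_sup (Multiset.mem_of_mem_erase hx)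
      have h2 : x ≠ L := fun h => hnodup.notMem_erase (h ▸ hx)
      have h3 : ¬Even x := hodd x (Multiset.mem_of_mem_erase hx)
      rw [Nat.not_even_iff] at h3
      omega
    -- build preimage
    refine ⟨⟨(L - 2) ::ₘ q.parts.erase L, ?_, ?_⟩, ?_, ?_⟩
    · intro i hi
      rcases Multiset.mem_cons.mp hi with rfl | hi
      · omega
      · exact q.parts_pos (Multiset.mem_of_mem_erase hi)
    · have h := Multiset.cons_erase hmem
      have hsum : q.parts.sum = m + 2 := q.parts_sum
      rw [← h, Multiset.sum_cons] at hsum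
      rw [Multiset.sum_cons]
      have hLle : L ≤ m + 2 := part_le q hmem
      omega
    · rw [mem_oddDistincts]
      constructor
      · intro i hi
        rcases Multiset.mem_cons.mp hi with rfl | hi
        · rw [Nat.not_even_iff]; omega
        · exact hodd i (Multiset.mem_of_mem_erase hi)
      · rw [Multiset.nodup_cons]
        exact ⟨fun h => hL2notin (Multiset.mem_of_mem_erase h), hnodup.erase L⟩
    · -- φ (preimage) = q
      apply Nat.Partition.ext
      simp only
      have hsupp : ((L - 2) ::ₘ q.parts.erase L).sup = L - 2 := by
        rw [Multiset.sup_cons]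
        have : (q.parts.erase L).sup ≤ L - 2 := by
          rw [Multiset.sup_le]; exact herase_lt
        omega
      rw [hsupp, Multiset.erase_cons_head]
      have : L - 2 + 2 = L := by omega
      rw [this, Multiset.cons_erase hmem]

theorem sum_theta_eq (n : ℕ) :
    ∑ p ∈ Nat.Partition.oddDistincts n, thetaPOD p =
      #((Nat.Partition.oddDistincts n).filter fun p => thetaPOD p = 1) := by
  classical
  rw [← Finset.sum_filter_add_sum_filter_not (Nat.Partition.oddDistincts n)
    (fun p => thetaPOD p = 1)]
  have h1 : ∑ p ∈ (Nat.Partition.oddDistincts n).filter (fun p => thetaPOD p = 1),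
      thetaPOD p = #((Nat.Partition.oddDistincts n).filter fun p => thetaPOD p = 1) := by
    rw [Finset.sum_congr rfl (fun p hp => (Finset.mem_filter.mp hp).2)]
    simp
  have h2 : ∑ p ∈ (Nat.Partition.oddDistincts n).filter (fun p => ¬thetaPOD p = 1),
      thetaPOD p = 0 := by
    apply Finset.sum_eq_zero
    intro p hp
    have := thetaPOD_le_one p
    have := (Finset.mem_filter.mp hp).2
    omega
  rw [h1, h2, add_zero]

theorem keyNat (n : ℕ) :
    (if 2 ≤ n then #(Nat.Partition.oddDistincts (n - 2)) else 0) =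
      (if n = 2 then 1 else 0) + ∑ p ∈ Nat.Partition.oddDistincts n, thetaPOD p := by
  match n with
  | 0 =>
    simp only [if_neg (by omega : ¬ 2 ≤ 0), if_neg (by omega : ¬ (0:ℕ) = 2), zero_add]
    exact (Finset.sum_eq_zero fun p _ => theta_zero_of_small (by omega) p).symm
  | 1 =>
    simp only [if_neg (by omega : ¬ 2 ≤ 1), if_neg (by omega : ¬ (1:ℕ) = 2), zero_add]
    exact (Finset.sum_eq_zero fun p _ => theta_zero_of_small (by omega) p).symm
  | 2 =>
    simp only [if_pos (by omega : 2 ≤ 2), if_pos rfl]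
    rw [show (2 : ℕ) - 2 = 0 from rfl, oddDistincts_zero_card, oddDistincts_two]
    simp
  | (m + 3) =>
    rw [if_pos (by omega), if_neg (by omega), zero_add, sum_theta_eq]
    have : m + 3 - 2 = m + 1 := by omega
    rw [this]
    exact bij_card (m + 1) (by omega)

end Combinatorics

/-- `(-q;q²)∞ (1 - q² + zq²) = (z-1)q² + Σ_{π ∈ POD} z^{θ(π)} q^{|π|}`: the
coefficient of `qⁿ` of the left side (product truncated at any `N ≥ n`) is the
sum of `z^{θ(π)}` over partitions `π` of `n` into distinct odd parts, plus an
extra `z - 1` when `n = 2`. -/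
theorem distinct_odd_times_quadratic_eq_theta_sum :
    ∀ N n : ℕ, n ≤ N →
      PowerSeries.coeff (R := L) n
        ((∏ k ∈ Icc 1 N, (1 + (X : PowerSeries L) ^ (2 * k - 1))) *
          (1 - X ^ 2 + C (R := L) Z * X ^ 2)) =
      (if n = 2 then Z - 1 else 0) + ∑ p ∈ Nat.Partition.oddDistincts n, Z ^ thetaPOD p := by
  intro N n hn
  classical
  -- reindex the product
  have hprod : ∀ M : ℕ, (∏ k ∈ Icc 1 M, (1 + (X : PowerSeries L) ^ (2 * k - 1))) =
      ∏ i ∈ range M, (1 + (X : PowerSeries L) ^ (2 * i + 1)) := by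
    intro M
    induction M with
    | zero => simp
    | succ M ih =>
      rw [Finset.prod_Icc_succ_top (by omega), Finset.prod_range_succ, ih,
        show 2 * (M + 1) - 1 = 2 * M + 1 by omega]
  set F := ∏ i ∈ range N, (1 + (X : PowerSeries L) ^ (2 * i + 1)) with hF
  have hG : (1 - X ^ 2 + C (R := L) Z * X ^ 2 : PowerSeries L) = 1 + C (R := L) (Z - 1) * X ^ 2 := by
    rw [map_sub, map_one]; ring
  rw [hprod N, hG, mul_add, mul_one, map_add]
  have hXmul : F * (C (R := L) (Z - 1) * X ^ 2) = C (R := L) (Z - 1) * F * X ^ 2 := by ring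
  rw [hXmul, mul_assoc, PowerSeries.coeff_C_mul, PowerSeries.coeff_mul_X_pow']
  have hcoeffF : ∀ d, d ≤ N → PowerSeries.coeff (R := L) d F =
      (#(Nat.Partition.oddDistincts d) : L) := by
    intro d hd
    rw [hF, ← Theorems100.oddDistinctGF_prop d N hd]
  rw [hcoeffF n hn]
  have hsum : ∑ p ∈ Nat.Partition.oddDistincts n, Z ^ thetaPOD p =
      (#(Nat.Partition.oddDistincts n) : L) +
        (Z - 1) * ((∑ p ∈ Nat.Partition.oddDistincts n, thetaPOD p : ℕ) : L) := by
    have hterm : ∀ p : n.Partition, Z ^ thetaPOD p = 1 + (Z - 1) * (thetaPOD p : L) := by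
      intro p
      have := thetaPOD_le_one p
      interval_cases h : thetaPOD p <;> simp
    rw [Finset.sum_congr rfl fun p _ => hterm p, Finset.sum_add_distrib]
    rw [Finset.sum_const, nsmul_eq_mul, mul_one, ← Finset.mul_sum, Nat.cast_sum]
  rw [hsum]
  have hkey := keyNat n
  split_ifs with h2 hn2 hn2
  · -- 2 ≤ n, n = 2
    subst hn2
    rw [hcoeffF (2 - 2) (by omega)]
    rw [if_pos rfl, if_pos (by omega : (2:ℕ) ≤ 2)] at hkey
    rw [congrArg (Nat.cast : ℕ → L) hkey]
    push_cast
    ring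
  · -- 2 ≤ n, n ≠ 2
    rw [hcoeffF (n - 2) (by omega)]
    rw [if_pos h2, if_neg hn2, zero_add] at hkey
    rw [congrArg (Nat.cast : ℕ → L) hkey]
    ring
  · omega
  · -- n < 2
    rw [if_neg h2, if_neg hn2, zero_add] at hkey
    rw [← congrArg (Nat.cast : ℕ → L) hkey]
    push_cast
    ring
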